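/- Every type II state operator on a pseudo-hoop A is a type III state operator. Moreover, if A is bounded, the kernel of any type II state operator is an involutive filter of A. -/

import Mathlib

universe u v

class PseudoHoop (A : Type u) extends One A, Mul A where
  rimp : A → A → A
  limp : A → A → A
  mul_one' : ∀ x : A, x * 1 = x
  one_mul' : ∀ x : A, 1 * x = x
  rimp_self : ∀ x : A, rimp x x = 1
  limp_self : ∀ x : A, limp x x = 1
  mul_rimp : ∀ x y z : A, rimp (x * y) z = rimp x (rimp y z)
  mul_limp : ∀ x y z : A, limp (x * y) z = limp y (limp x z)
  div₁ : ∀ x y : A, (rimp x y) * x = (rimp y x) * y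
  div₂ : ∀ x y : A, (rimp x y) * x = x * (limp x y)
  div₃ : ∀ x y : A, x * (limp x y) = y * (limp y x)

namespace PseudoHoop

/-- The order on a pseudo-hoop: `x ≤ y` iff `x → y = 1`. -/
def ple {A : Type u} [PseudoHoop A] (x y : A) : Prop := rimp x y = 1

/-- The meet `x ∧ y = (x → y) ⊙ x`. -/
def meet {A : Type u} [PseudoHoop A] (x y : A) : A := (rimp x y) * x

/-- `x ∨₁ y = (x → y) ⇝ y`. -/
def join₁ {A : Type u} [PseudoHoop A] (x y : A) : A := limp (rimp x y) y

/-- `x ∨₂ y = (x ⇝ y) → y`. -/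
def join₂ {A : Type u} [PseudoHoop A] (x y : A) : A := rimp (limp x y) y

/-- Iterated implication: `x →⁰ y = y`, `x →ⁿ⁺¹ y = x → (x →ⁿ y)`. -/
def rimpPow {A : Type u} [PseudoHoop A] (x : A) : ℕ → A → A
  | 0, y => y
  | n + 1, y => rimp x (rimpPow x n y)

/-- A filter of a pseudo-hoop. -/
structure IsFilter {A : Type u} [PseudoHoop A] (F : Set A) : Prop where
  nonempty : F.Nonempty
  mul_mem : ∀ {x y : A}, x ∈ F → y ∈ F → x * y ∈ F
  upward : ∀ {x y : A}, x ∈ F → ple x y → y ∈ F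

/-- A normal filter: `x → y ∈ F` iff `x ⇝ y ∈ F`. -/
def IsNormalFilter {A : Type u} [PseudoHoop A] (F : Set A) : Prop :=
  IsFilter F ∧ ∀ x y : A, rimp x y ∈ F ↔ limp x y ∈ F

def IsProper {A : Type u} [PseudoHoop A] (F : Set A) : Prop := F ≠ Set.univ

/-- A pseudo-hoop is simple if `{1}` is its unique proper filter. -/
def IsSimple (A : Type u) [PseudoHoop A] : Prop :=
  ∀ F : Set A, IsFilter F → IsProper F → F = {1}

/-- A pseudo-hoop is Wajsberg if `x ∨₁ y = y ∨₁ x` and `x ∨₂ y = y ∨₂ x`. -/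
def IsWajsberg (A : Type u) [PseudoHoop A] : Prop :=
  ∀ x y : A, join₁ x y = join₁ y x ∧ join₂ x y = join₂ y x

/-- A fantastic filter. -/
def IsFantasticFilter {A : Type u} [PseudoHoop A] (F : Set A) : Prop :=
  IsFilter F ∧ ∀ x y : A,
    (rimp y x ∈ F → rimp (join₁ x y) x ∈ F) ∧
    (limp y x ∈ F → limp (join₂ x y) x ∈ F)

def IS₂ {A : Type u} [PseudoHoop A] (μ : A → A) : Prop :=
  ∀ x y : A, μ (x * y) = μ x * μ (limp x (x * y)) ∧
    μ (x * y) = μ (rimp y (x * y)) * μ y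

def IS₃ {A : Type u} [PseudoHoop A] (μ : A → A) : Prop :=
  ∀ x y : A, μ (μ x * μ y) = μ x * μ y

def IS₄ {A : Type u} [PseudoHoop A] (μ : A → A) : Prop :=
  ∀ x y : A, μ (rimp (μ x) (μ y)) = rimp (μ x) (μ y) ∧
    μ (limp (μ x) (μ y)) = limp (μ x) (μ y)

/-- Type I state operator. -/
def IsStateI {A : Type u} [PseudoHoop A] (μ : A → A) : Prop :=
  (∀ x y : A, μ (rimp x y) = rimp (μ (join₁ x y)) (μ y) ∧
      μ (limp x y) = limp (μ (join₂ x y)) (μ y)) ∧ IS₂ μ ∧ IS₃ μ ∧ IS₄ μ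

/-- Type II state operator. -/
def IsStateII {A : Type u} [PseudoHoop A] (μ : A → A) : Prop :=
  (∀ x y : A, μ (rimp x y) = rimp (μ (join₁ y x)) (μ y) ∧
      μ (limp x y) = limp (μ (join₂ y x)) (μ y)) ∧ IS₂ μ ∧ IS₃ μ ∧ IS₄ μ

/-- Type III state operator. -/
def IsStateIII {A : Type u} [PseudoHoop A] (μ : A → A) : Prop :=
  (∀ x y : A, μ (rimp x y) = rimp (μ x) (μ (meet x y)) ∧
      μ (limp x y) = limp (μ x) (μ (meet x y))) ∧ IS₂ μ ∧ IS₃ μ ∧ IS₄ μ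

end PseudoHoop

open PseudoHoop

/-- A bounded pseudo-hoop: a pseudo-hoop with a least element `0`. -/
class BoundedPseudoHoop (A : Type u) extends PseudoHoop A, Zero A where
  zero_le : ∀ x : A, rimp 0 x = 1

namespace BoundedPseudoHoop

/-- `x⁻ = x → 0`. -/
def negr {A : Type u} [BoundedPseudoHoop A] (x : A) : A := rimp x 0

/-- `x∼ = x ⇝ 0`. -/
def negl {A : Type u} [BoundedPseudoHoop A] (x : A) : A := limp x 0

/-- A bounded pseudo-hoop is good if `x⁻∼ = x∼⁻` for all `x`. -/
def IsGood (A : Type u) [BoundedPseudoHoop A] : Prop :=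
  ∀ x : A, negl (negr x) = negr (negl x)

/-- A bounded pseudo-hoop is involutive if `x⁻∼ = x∼⁻ = x` for all `x`. -/
def IsInvolutive (A : Type u) [BoundedPseudoHoop A] : Prop :=
  ∀ x : A, negl (negr x) = x ∧ negr (negl x) = x

/-- The set of dense elements. -/
def Den (A : Type u) [BoundedPseudoHoop A] : Set A :=
  {x : A | negl (negr x) = 1}

/-- An involutive filter: `x⁻∼ → x ∈ F` and `x∼⁻ ⇝ x ∈ F` for all `x`. -/
def IsInvolutiveFilter {A : Type u} [BoundedPseudoHoop A] (F : Set A) : Prop :=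
  IsFilter F ∧ ∀ x : A, rimp (negl (negr x)) x ∈ F ∧ limp (negr (negl x)) x ∈ F

end BoundedPseudoHoop

open BoundedPseudoHoop

/-!
For a type II state operator, `μ (x → y) = μ x → μ y` whenever `y ≤ x`, because then
`y ∨₁ x = x`. As `x → y = x → (x ∧ y)` and `x ∧ y ≤ x`, this is the type III axiom.

By (IS₂), `μ (y ⊙ z) ≤ μ y`, so the kernel is upward closed, and `μ (x ⊙ y) = μ (x ⇝ x ⊙ y)`
with `y ≤ x ⇝ x ⊙ y`, so it is closed under `⊙`. Finally `x ≤ x⁻∼ = x ∨₁ 0`, hence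
`μ (x⁻∼ → x) = μ (x⁻∼) → μ x = μ (x ∨₁ 0) → μ x = μ (0 → x) = μ 1 = 1`.
-/

namespace PseudoHoop

section Order

variable {A : Type u} [PseudoHoop A] {x y z : A}

theorem ple_iff_rimp_eq_one : ple x y ↔ rimp x y = 1 := Iff.rfl

theorem ple_refl (x : A) : ple x x := rimp_self x

theorem ple_antisymm (hxy : ple x y) (hyx : ple y x) : x = y := by
  have h := div₁ x y
  rwa [hxy, hyx, one_mul', one_mul'] at h

theorem ple_rimp_mul (x y : A) : ple x (rimp y (x * y)) := by
  rw [ple_iff_rimp_eq_one, ← mul_rimp, rimp_self]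

theorem meet_eq_mul_limp (x y : A) : meet x y = x * limp x y := div₂ x y

theorem meet_ple_right (x y : A) : ple (meet x y) y := by
  rw [ple_iff_rimp_eq_one, meet, mul_rimp, rimp_self]

theorem one_rimp (x : A) : rimp 1 x = x := by
  have hdiv : rimp 1 x = rimp x 1 * x := by simpa only [mul_one'] using div₁ 1 x
  have hle : ple x (rimp 1 x) := by simpa only [mul_one'] using ple_rimp_mul x 1
  have hone : rimp (rimp x 1) 1 = 1 := by
    have h := mul_rimp (rimp x 1) x (rimp 1 x)
    rwa [← hdiv, rimp_self, hle, eq_comm] at h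
  refine ple_antisymm ?_ hle
  rw [ple_iff_rimp_eq_one, hdiv, mul_rimp, rimp_self, hone]

theorem one_limp (x : A) : limp 1 x = x := by
  simpa only [one_rimp, mul_one', one_mul'] using (div₂ 1 x).symm

theorem limp_one (x : A) : limp x 1 = 1 := by
  have hx : x * limp x 1 = x := by simpa only [one_limp, one_mul'] using div₃ x 1
  simpa only [hx, limp_self] using mul_limp x (limp x 1) 1

theorem rimp_one (x : A) : rimp x 1 = 1 := by
  have hx : rimp x 1 * x = x := by simpa only [limp_one, mul_one'] using div₂ x 1
  simpa only [hx, rimp_self] using mul_rimp (rimp x 1) x 1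

theorem eq_rimp_mul_of_ple (h : ple x y) : x = rimp y x * y := by
  have h' := div₁ x y
  rwa [h, one_mul'] at h'

theorem eq_mul_limp_of_ple (h : ple x y) : x = y * limp y x := by
  have h' := div₂ x y
  rw [h, one_mul'] at h'
  exact h'.trans (div₃ x y)

theorem ple_iff_limp_eq_one : ple x y ↔ limp x y = 1 := by
  constructor
  · intro h
    rw [eq_mul_limp_of_ple h, mul_limp, limp_self, limp_one]
  · intro h
    have hx : meet x y = x := by rw [meet_eq_mul_limp, h, mul_one']
    exact hx ▸ meet_ple_right x y

theorem ple_trans (hxy : ple x y) (hyz : ple y z) : ple x z := by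
  rw [ple_iff_rimp_eq_one, eq_rimp_mul_of_ple hxy, mul_rimp, hyz, rimp_one]

theorem mul_ple_left (x y : A) : ple (x * y) x := by
  rw [ple_iff_limp_eq_one, mul_limp, limp_self, limp_one]

theorem mul_ple_right (x y : A) : ple (x * y) y := by
  rw [ple_iff_rimp_eq_one, mul_rimp, rimp_self, rimp_one]

theorem eq_one_of_mul_eq_one_left (h : x * y = 1) : x = 1 := by
  have h1 : ple 1 x := h ▸ mul_ple_left x y
  rwa [ple_iff_rimp_eq_one, one_rimp] at h1

theorem ple_limp_mul (x y : A) : ple x (limp y (y * x)) := by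
  rw [ple_iff_limp_eq_one, ← mul_limp, limp_self]

theorem meet_ple_left (x y : A) : ple (meet x y) x := mul_ple_right (rimp x y) x

theorem rimp_mono_right (h : ple y z) : ple (rimp x y) (rimp x z) := by
  rw [ple_iff_rimp_eq_one, ← mul_rimp]
  exact ple_trans (meet_ple_right x y) h

theorem limp_mono_right (h : ple y z) : ple (limp x y) (limp x z) := by
  rw [ple_iff_limp_eq_one, ← mul_limp, ← meet_eq_mul_limp, ← ple_iff_limp_eq_one]
  exact ple_trans (meet_ple_right x y) h

theorem rimp_meet (x y : A) : rimp x (meet x y) = rimp x y :=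
  ple_antisymm (rimp_mono_right (meet_ple_right x y)) (ple_rimp_mul (rimp x y) x)

theorem limp_meet (x y : A) : limp x (meet x y) = limp x y := by
  refine ple_antisymm (limp_mono_right (meet_ple_right x y)) ?_
  rw [meet_eq_mul_limp]
  exact ple_limp_mul (limp x y) x

theorem ple_join₁ (x y : A) : ple x (join₁ x y) := by
  rw [join₁, ple_iff_limp_eq_one, ← mul_limp, ← ple_iff_limp_eq_one]
  exact meet_ple_right x y

theorem ple_join₂ (x y : A) : ple x (join₂ x y) := by
  rw [join₂, ple_iff_rimp_eq_one, ← mul_rimp, ← meet_eq_mul_limp]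
  exact meet_ple_right x y

theorem join₁_eq_of_ple (h : ple x y) : join₁ x y = y := by
  rw [join₁, h, one_limp]

theorem join₂_eq_of_ple (h : ple x y) : join₂ x y = y := by
  rw [join₂, ple_iff_limp_eq_one.mp h, one_rimp]

end Order

section StateOperator

variable {A : Type u} [PseudoHoop A] {μ : A → A} {x y : A}

theorem IsStateII.map_rimp_of_ple (hμ : IsStateII μ) (h : ple y x) :
    μ (rimp x y) = rimp (μ x) (μ y) := by
  rw [(hμ.1 x y).1, join₁_eq_of_ple h]

theorem IsStateII.map_limp_of_ple (hμ : IsStateII μ) (h : ple y x) :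
    μ (limp x y) = limp (μ x) (μ y) := by
  rw [(hμ.1 x y).2, join₂_eq_of_ple h]

theorem IsStateII.map_one (hμ : IsStateII μ) : μ 1 = 1 := by
  simpa only [rimp_self] using hμ.map_rimp_of_ple (ple_refl (1 : A))

theorem IsStateII.isStateIII (hμ : IsStateII μ) : IsStateIII μ := by
  refine ⟨fun x y => ⟨?_, ?_⟩, hμ.2⟩
  · rw [← rimp_meet, hμ.map_rimp_of_ple (meet_ple_left x y)]
  · rw [← limp_meet, hμ.map_limp_of_ple (meet_ple_left x y)]

theorem IS₂.map_eq_one_of_ple (hμ : IS₂ μ) (hx : μ x = 1) (h : ple x y) : μ y = 1 := by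
  have hfac := (hμ y (limp y x)).1
  rw [← eq_mul_limp_of_ple h, hx] at hfac
  exact eq_one_of_mul_eq_one_left hfac.symm

theorem IS₂.isFilter_ker (hμ : IS₂ μ) (h1 : μ 1 = 1) : IsFilter {x | μ x = 1} where
  nonempty := ⟨1, h1⟩
  mul_mem {x y} (hx : μ x = 1) hy := by
    have hfac := (hμ x y).1
    rw [hx, one_mul'] at hfac
    exact hfac.trans (hμ.map_eq_one_of_ple hy (ple_limp_mul y x))
  upward hx h := hμ.map_eq_one_of_ple hx h

end StateOperator

theorem IsStateII.isInvolutiveFilter_ker {B : Type v} [BoundedPseudoHoop B] {ν : B → B}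
    (hν : IsStateII ν) : IsInvolutiveFilter {x | ν x = 1} := by
  refine ⟨hν.2.1.isFilter_ker hν.map_one, fun x => ⟨?_, ?_⟩⟩
  · show ν (rimp (join₁ x 0) x) = 1
    rw [hν.map_rimp_of_ple (ple_join₁ x 0), ← (hν.1 0 x).1, BoundedPseudoHoop.zero_le,
      hν.map_one]
  · show ν (limp (join₂ x 0) x) = 1
    rw [hν.map_limp_of_ple (ple_join₂ x 0), ← (hν.1 0 x).2,
      ple_iff_limp_eq_one.mp (BoundedPseudoHoop.zero_le x), hν.map_one]

end PseudoHoop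

theorem stmt19 :
    (∀ (A : Type u) [PseudoHoop A] (μ : A → A), IsStateII μ → IsStateIII μ) ∧
    (∀ (B : Type v) [BoundedPseudoHoop B] (ν : B → B), IsStateII ν →
      IsInvolutiveFilter {x : B | ν x = 1}) :=
  ⟨fun _ _ _ => IsStateII.isStateIII, fun _ _ _ => IsStateII.isInvolutiveFilter_ker⟩
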